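/- Let L = L_1 ∪ ⋯ ∪ L_n be a finite union of languages such that for each i there exists a function f_i : L_i → ℕ with (u <_ℓ v → f_i u < f_i v) for all u, v ∈ L_i, or a function f_i : L_i → ℕ with (u <_ℓ v → f_i v < f_i u). Then blim L is finite, with at most n elements. (This is the content of the corollary that a scattered language of Hausdorff rank at most one has finitely many limits.) -/

import Mathlib

variable {α : Type*} [Fintype α] [LinearOrder α] [Nonempty α]

/-- `w↾n`, the length-`n` prefix of the ω-word `w`. -/
def restrict (w : ℕ → α) (n : ℕ) : List α := List.ofFn (fun i : Fin n => w i)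

/-- `w` is a limit of `L`: every finite prefix of `w` is a proper prefix of some word of `L`. -/
def blim (L : Set (List α)) : Set (ℕ → α) :=
  {w | ∀ n : ℕ, ∃ u ∈ L, restrict w n <+: u ∧ restrict w n ≠ u}

/-- `u <_ℓ w` for a word `u` and an ω-word `w`. -/
def wordLtOmega (u : List α) (w : ℕ → α) : Prop :=
  u = restrict w u.length ∨
    ∃ (i : ℕ) (h : i < u.length), u.take i = restrict w i ∧ u.get ⟨i, h⟩ < w i

/-- `w <_ℓ u` for an ω-word `w` and a word `u`. -/
def omegaLtWord (w : ℕ → α) (u : List α) : Prop :=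
  ∃ (i : ℕ) (h : i < u.length), u.take i = restrict w i ∧ w i < u.get ⟨i, h⟩

/-- `w <_ℓ w'` for ω-words. -/
def omegaLt (w w' : ℕ → α) : Prop :=
  ∃ n : ℕ, (∀ i < n, w i = w' i) ∧ w n < w' n

/-- `w ≤_ℓ w'` for ω-words. -/
def omegaLe (w w' : ℕ → α) : Prop := w = w' ∨ omegaLt w w'

/-- Concatenation `u·w` of a finite word and an ω-word. -/
def ocat (u : List α) (w : ℕ → α) : ℕ → α :=
  fun i => if h : i < u.length then u.get ⟨i, h⟩ else w (i - u.length)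

/-- The strict order `u <_s v` on words. -/
def strictLt (u v : List α) : Prop :=
  ∃ (x y z : List α) (a b : α), a < b ∧ u = x ++ a :: y ∧ v = x ++ b :: z

/-- `v^ω` for a nonempty word `v`. -/
def wpow (v : List α) (hv : v ≠ []) : ℕ → α :=
  fun i => v.get ⟨i % v.length, Nat.mod_lt _ (List.length_pos_of_ne_nil hv)⟩

/-- `u^n`, the `n`-fold concatenation of the word `u` with itself. -/
def npow (u : List α) (n : ℕ) : List α := (List.replicate n u).flatten

set_option linter.unusedSectionVars false

lemma restrict_length (w : ℕ → α) (n : ℕ) : (restrict w n).length = n := by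
  simp [restrict]

lemma restrict_prefix (w : ℕ → α) {n m : ℕ} (h : n ≤ m) :
    restrict w n <+: restrict w m := by
  refine ⟨List.ofFn (fun i : Fin (m - n) => w (n + i)), ?_⟩
  apply List.ext_getElem
  · simp [restrict]; omega
  · intro i h1 h2
    simp only [restrict, List.length_ofFn] at h1 h2 ⊢
    by_cases hi : i < n
    · rw [List.getElem_append_left (by simpa [restrict] using hi)]
      simp [restrict]
    · rw [List.getElem_append_right (by simpa [restrict] using hi)]
      simp only [restrict, List.getElem_ofFn]
      congr 1
      simp
      omega

lemma restrict_succ (w : ℕ → α) (k : ℕ) : restrict w (k+1) = restrict w k ++ [w k] := by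
  show List.ofFn _ = _
  rw [List.ofFn_succ']
  simp [restrict, List.concat_eq_append]

lemma lex_append (x : List α) {a b : α} (hab : a < b) (y z : List α) :
    List.Lex (· < ·) (x ++ a :: y) (x ++ b :: z) := by
  induction x with
  | nil => exact List.Lex.rel hab
  | cons c x ih => exact List.Lex.cons ih

lemma proper_long {u v : List α} (hp : u <+: v) (hne : u ≠ v) : u.length < v.length := by
  rcases lt_or_eq_of_le hp.length_le with h | h
  · exact h
  · exact absurd (hp.eq_of_length h) hne

lemma blim_ext_infinite (L : Set (List α)) (w : ℕ → α) (hw : w ∈ blim L) (m : ℕ) :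
    {u : List α | u ∈ L ∧ restrict w m <+: u ∧ restrict w m ≠ u}.Infinite := by
  intro hfin
  obtain ⟨N, hN⟩ := (hfin.image List.length).bddAbove
  simp only [mem_upperBounds, Set.mem_image] at hN
  obtain ⟨u, huL, hup, hune⟩ := hw (max m N)
  have hlen : max m N < u.length := by
    have := proper_long hup hune
    simpa [restrict_length] using this
  have humem : u ∈ {u : List α | u ∈ L ∧ restrict w m <+: u ∧ restrict w m ≠ u} := by
    refine ⟨huL, (restrict_prefix w (le_max_left m N)).trans hup, ?_⟩
    intro heq
    have := restrict_length w m
    rw [heq] at this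
    omega
  have := hN u.length ⟨u, humem, rfl⟩
  omega

lemma restrict_congr {w w' : ℕ → α} {k : ℕ} (h : ∀ j < k, w j = w' j) :
    restrict w k = restrict w' k := by
  simp only [restrict]
  congr 1
  funext i
  exact h i i.2

lemma lex_of_ext {w w' : ℕ → α} {k : ℕ} (hagree : ∀ j < k, w j = w' j) (hk : w k < w' k)
    {u v : List α} (hu : restrict w (k+1) <+: u) (hv : restrict w' (k+1) <+: v) :
    List.Lex (· < ·) u v := by
  obtain ⟨t, ht⟩ := hu
  obtain ⟨t', ht'⟩ := hv
  rw [← ht, ← ht', restrict_succ, restrict_succ, restrict_congr hagree,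
    List.append_assoc, List.append_assoc]
  exact lex_append _ hk _ _

lemma f_inj {L : Set (List α)} {f : {u : List α // u ∈ L} → ℕ}
    (hf : (∀ u v : {u : List α // u ∈ L}, List.Lex (· < ·) u.1 v.1 → f u < f v) ∨
          (∀ u v : {u : List α // u ∈ L}, List.Lex (· < ·) u.1 v.1 → f v < f u))
    {u v : {u : List α // u ∈ L}} (hne : u.1 ≠ v.1) : f u ≠ f v := by
  rcases trichotomous_of (List.Lex (α := α) (· < ·)) u.1 v.1 with hl | hl | hl
  · rcases hf with hf | hf
    · exact (hf u v hl).ne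
    · exact (hf u v hl).ne'
  · exact absurd hl hne
  · rcases hf with hf | hf
    · exact (hf v u hl).ne'
    · exact (hf v u hl).ne

lemma bounded_contra {L : Set (List α)} {f : {u : List α // u ∈ L} → ℕ}
    (hf : (∀ u v : {u : List α // u ∈ L}, List.Lex (· < ·) u.1 v.1 → f u < f v) ∨
          (∀ u v : {u : List α // u ∈ L}, List.Lex (· < ·) u.1 v.1 → f v < f u))
    {S : Set (List α)} (hSL : ∀ u ∈ S, u ∈ L) (hS : S.Infinite) (B : ℕ)
    (hb : ∀ u (h : u ∈ S), f ⟨u, hSL u h⟩ < B) : False := by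
  have : Finite ↥S := by
    refine Finite.of_injective (fun u : S => (⟨f ⟨u.1, hSL u.1 u.2⟩, hb u.1 u.2⟩ : Fin B)) ?_
    intro u v he
    simp only [Fin.mk.injEq] at he
    by_contra hne
    exact f_inj hf (fun h => hne (Subtype.ext h)) he
  have := hS.to_subtype
  exact not_finite ↥S

lemma key_inc {L : Set (List α)} (f : {u : List α // u ∈ L} → ℕ)
    (hf : ∀ u v : {u : List α // u ∈ L}, List.Lex (· < ·) u.1 v.1 → f u < f v)
    {w w' : ℕ → α} (hw : w ∈ blim L) (hw' : w' ∈ blim L)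
    {k : ℕ} (hagree : ∀ j < k, w j = w' j) (hk : w k < w' k) : False := by
  obtain ⟨v₀, hv₀L, hv₀p, _⟩ := hw' (k+1)
  refine bounded_contra (Or.inl hf)
    (fun u (h : u ∈ {u : List α | u ∈ L ∧ restrict w (k+1) <+: u ∧ restrict w (k+1) ≠ u}) => h.1)
    (blim_ext_infinite L w hw (k+1)) (f ⟨v₀, hv₀L⟩) ?_
  intro u hu
  exact hf _ _ (lex_of_ext hagree hk hu.2.1 hv₀p)

lemma key_dec {L : Set (List α)} (f : {u : List α // u ∈ L} → ℕ)
    (hf : ∀ u v : {u : List α // u ∈ L}, List.Lex (· < ·) u.1 v.1 → f v < f u)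
    {w w' : ℕ → α} (hw : w ∈ blim L) (hw' : w' ∈ blim L)
    {k : ℕ} (hagree : ∀ j < k, w j = w' j) (hk : w k < w' k) : False := by
  obtain ⟨u₀, hu₀L, hu₀p, _⟩ := hw (k+1)
  refine bounded_contra (Or.inr hf)
    (fun v (h : v ∈ {v : List α | v ∈ L ∧ restrict w' (k+1) <+: v ∧ restrict w' (k+1) ≠ v}) => h.1)
    (blim_ext_infinite L w' hw' (k+1)) (f ⟨u₀, hu₀L⟩) ?_
  intro v hv
  exact hf _ _ (lex_of_ext hagree hk hu₀p hv.2.1)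

lemma blim_subsing (L : Set (List α))
    (h : (∃ f : {u : List α // u ∈ L} → ℕ,
        ∀ u v : {u : List α // u ∈ L}, List.Lex (· < ·) u.1 v.1 → f u < f v) ∨
      (∃ f : {u : List α // u ∈ L} → ℕ,
        ∀ u v : {u : List α // u ∈ L}, List.Lex (· < ·) u.1 v.1 → f v < f u)) :
    (blim L).Subsingleton := by
  intro w hw w' hw'
  by_contra hne
  have hex : ∃ k, w k ≠ w' k := by
    by_contra h'
    push_neg at h'
    exact hne (funext h')
  have hk := Nat.find_spec hex
  have hagree : ∀ j < Nat.find hex, w j = w' j := fun j hj => by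
    by_contra h'
    exact Nat.find_min hex hj h'
  rcases lt_or_gt_of_ne hk with hlt | hgt
  · rcases h with ⟨f, hf⟩ | ⟨f, hf⟩
    · exact key_inc f hf hw hw' hagree hlt
    · exact key_dec f hf hw hw' hagree hlt
  · have hagree' : ∀ j < Nat.find hex, w' j = w j := fun j hj => (hagree j hj).symm
    rcases h with ⟨f, hf⟩ | ⟨f, hf⟩
    · exact key_inc f hf hw' hw hagree' hgt
    · exact key_dec f hf hw' hw hagree' hgt

/-- a finite union of `n` languages each embedding into `ω` or `ω* = -ω`
has at most `n` limits. -/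
theorem stmt18 (n : ℕ) (Ls : Fin n → Set (List α))
    (h : ∀ i : Fin n,
      (∃ f : {u : List α // u ∈ Ls i} → ℕ,
        ∀ u v : {u : List α // u ∈ Ls i}, List.Lex (· < ·) u.1 v.1 → f u < f v) ∨
      (∃ f : {u : List α // u ∈ Ls i} → ℕ,
        ∀ u v : {u : List α // u ∈ Ls i}, List.Lex (· < ·) u.1 v.1 → f v < f u)) :
    (blim (⋃ i, Ls i)).encard ≤ n := by
  classical
  have hsub : ∀ i, (blim (Ls i)).Subsingleton := fun i => blim_subsing (Ls i) (h i)
  have hcover : ∀ w ∈ blim (⋃ i, Ls i), ∃ i, w ∈ blim (Ls i) := by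
    intro w hw
    have hP : ∀ m : ℕ, ∃ i, ∃ u ∈ Ls i, restrict w m <+: u ∧ restrict w m ≠ u := by
      intro m
      obtain ⟨u, hu, hp, hne⟩ := hw m
      obtain ⟨i, hi⟩ := Set.mem_iUnion.1 hu
      exact ⟨i, u, hi, hp, hne⟩
    choose g hg using hP
    obtain ⟨j, hj⟩ := Finite.exists_infinite_fiber g
    refine ⟨j, fun m => ?_⟩
    obtain ⟨M, hM, hmM⟩ := (Set.infinite_coe_iff.1 hj).exists_gt m
    obtain ⟨u, huL, hup, hune⟩ := hg M
    have hMj : g M = j := hM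
    rw [hMj] at huL
    have hlen : M < u.length := by
      have := proper_long hup hune
      simpa [restrict_length] using this
    refine ⟨u, huL, (restrict_prefix w hmM.le).trans hup, ?_⟩
    intro heq
    have := restrict_length (α := α) w m
    rw [heq] at this
    omega
  have hch : ∀ w : ↥(blim (⋃ i, Ls i)), ∃ i, (w : ℕ → α) ∈ blim (Ls i) :=
    fun w => hcover w w.2
  choose F hF using hch
  have hFinj : Function.Injective F := by
    intro w w' he
    refine Subtype.ext (hsub (F w) (hF w) ?_)
    rw [he]
    exact hF w'
  have hfin : (blim (⋃ i, Ls i)).Finite := Set.finite_coe_iff.1 (Finite.of_injective F hFinj)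
  rw [hfin.encard_eq_coe_toFinset_card]
  norm_cast
  calc hfin.toFinset.card = Nat.card ↥(blim (⋃ i, Ls i)) := by
        rw [Nat.card_coe_set_eq, Set.ncard_eq_toFinset_card _ hfin]
    _ ≤ Nat.card (Fin n) := Nat.card_le_card_of_injective F hFinj
    _ = n := by simp
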